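/- arXiv:1507.08268 — 2 statements merged into one kernel-verified Lean document; each statement's English description precedes it below -/
import Mathlib

section
/- Suppose A : ℝ^N → ℝ^M satisfies: for all x, y ∈ K̄_s with x - y ∈ Λ_{K₀} and A(x) = A(y), one has ‖x - y‖₂ ≤ ε, where Λ_{K₀} = {v : K₀‖v‖_∞² ≤ ‖v‖₂²}. Let λ > 0, x₀ ∈ K̄_s with ‖x₀‖_∞ ≤ λ, and let x* minimize ‖u‖_♯ over {u : A(u) = A(x₀), ‖u‖₂ ≤ 1, ‖u‖_∞ ≤ λ}. Then ‖x₀ - x*‖₂ ≤ ε + 2λ√K₀. -/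
/-!
The minimizer `x*` is feasible for its own program and so is `x₀`, hence `‖x*‖_♯ ≤ ‖x₀‖_♯ ≤ s`
and both points lie in `K̄_s` with the same measurements. If `x₀ - x*` lies in the cone
`Λ_{K₀}`, the robust null space property gives `‖x₀ - x*‖₂ ≤ ε`. Otherwise
`‖x₀ - x*‖₂² < K₀ ‖x₀ - x*‖_∞² ≤ K₀ (2λ)²`, since both points have sup norm at most `λ`.
-/

open Finset

/-- Euclidean norm on `Fin N → ℝ`. -/
noncomputable def l2norm {N : ℕ} (x : Fin N → ℝ) : ℝ := Real.sqrt (∑ i, x i ^ 2)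

/-- Sup norm on `Fin N → ℝ` (for `N` nonempty). -/
noncomputable def linfnorm {N : ℕ} [Nonempty (Fin N)] (x : Fin N → ℝ) : ℝ :=
  Finset.univ.sup' Finset.univ_nonempty fun i => |x i|

section Norms

variable {N : ℕ} [Nonempty (Fin N)]

theorem abs_le_linfnorm (x : Fin N → ℝ) (i : Fin N) : |x i| ≤ linfnorm x :=
  Finset.le_sup' (fun j => |x j|) (Finset.mem_univ i)

theorem linfnorm_nonneg (x : Fin N → ℝ) : 0 ≤ linfnorm x :=
  (abs_nonneg _).trans (abs_le_linfnorm x (Classical.arbitrary _))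

theorem linfnorm_sub_le (x y : Fin N → ℝ) : linfnorm (x - y) ≤ linfnorm x + linfnorm y :=
  Finset.sup'_le _ _ fun i _ =>
    (abs_sub (x i) (y i)).trans (add_le_add (abs_le_linfnorm x i) (abs_le_linfnorm y i))

end Norms

/-- The paper's cone `Λ_{K₀}`. -/
def flatCone (N : ℕ) [Nonempty (Fin N)] (K₀ : ℝ) : Set (Fin N → ℝ) :=
  {v | K₀ * linfnorm v ^ 2 ≤ l2norm v ^ 2}

section Stability

variable {N M : ℕ} [Nonempty (Fin N)]

theorem l2norm_le_of_notMem_flatCone {K₀ c : ℝ} {v : Fin N → ℝ} (hv : v ∉ flatCone N K₀)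
    (hc : linfnorm v ≤ c) : l2norm v ≤ c * Real.sqrt K₀ := by
  have hspiky : l2norm v ^ 2 < K₀ * linfnorm v ^ 2 := not_le.mp hv
  have hK₀ : 0 ≤ K₀ := by
    by_contra! hneg
    nlinarith [sq_nonneg (linfnorm v), sq_nonneg (l2norm v)]
  have hc₀ : 0 ≤ c := (linfnorm_nonneg v).trans hc
  refine le_of_pow_le_pow_left₀ two_ne_zero (by positivity) ?_
  calc l2norm v ^ 2 ≤ K₀ * linfnorm v ^ 2 := hspiky.le
    _ ≤ K₀ * c ^ 2 := by gcongr; exact linfnorm_nonneg v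
    _ = (c * Real.sqrt K₀) ^ 2 := by rw [mul_pow, Real.sq_sqrt hK₀, mul_comm]

theorem l2norm_sub_le_of_robustNullSpace {K : Set (Fin N → ℝ)} {A : (Fin N → ℝ) → (Fin M → ℝ)}
    {ε K₀ c : ℝ} (hε : 0 ≤ ε)
    (hA : ∀ x ∈ K, ∀ y ∈ K, x - y ∈ flatCone N K₀ → A x = A y → l2norm (x - y) ≤ ε)
    {x y : Fin N → ℝ} (hx : x ∈ K) (hy : y ∈ K) (hAxy : A x = A y)
    (hc : linfnorm (x - y) ≤ c) : l2norm (x - y) ≤ ε + c * Real.sqrt K₀ := by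
  by_cases hflat : x - y ∈ flatCone N K₀
  · have hc₀ : 0 ≤ c := (linfnorm_nonneg _).trans hc
    exact (hA x hx y hy hflat hAxy).trans (le_add_of_nonneg_right (by positivity))
  · linarith [l2norm_le_of_notMem_flatCone hflat hc]

end Stability

theorem cobp_lambda_stability_general (N M : ℕ) [Nonempty (Fin N)] (ε s K₀ lam : ℝ)
    (hε : 0 < ε)
    (sharp : (Fin N → ℝ) → ℝ)
    (A : (Fin N → ℝ) → (Fin M → ℝ))
    (hA : ∀ x y : Fin N → ℝ,
      (sharp x ≤ s ∧ l2norm x ≤ 1) → (sharp y ≤ s ∧ l2norm y ≤ 1) →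
      K₀ * linfnorm (x - y) ^ 2 ≤ l2norm (x - y) ^ 2 →
      A x = A y → l2norm (x - y) ≤ ε)
    (x₀ xstar : Fin N → ℝ)
    (hx₀ : sharp x₀ ≤ s ∧ l2norm x₀ ≤ 1) (hx₀inf : linfnorm x₀ ≤ lam)
    (hfeas : A xstar = A x₀ ∧ l2norm xstar ≤ 1 ∧ linfnorm xstar ≤ lam)
    (hmin : ∀ u : Fin N → ℝ,
      A u = A x₀ ∧ l2norm u ≤ 1 ∧ linfnorm u ≤ lam → sharp xstar ≤ sharp u) :
    l2norm (x₀ - xstar) ≤ ε + 2 * lam * Real.sqrt K₀ := by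
  obtain ⟨hAxstar, hxstar, hxstar_inf⟩ := hfeas
  have hsharp : sharp xstar ≤ s := (hmin x₀ ⟨rfl, hx₀.2, hx₀inf⟩).trans hx₀.1
  have hinf : linfnorm (x₀ - xstar) ≤ 2 * lam := by
    linarith [linfnorm_sub_le x₀ xstar]
  exact l2norm_sub_le_of_robustNullSpace (K := {u | sharp u ≤ s ∧ l2norm u ≤ 1}) hε.le
    (fun x hx y hy => hA x y hx hy) hx₀ ⟨hsharp, hxstar⟩ hAxstar.symm hinf

/-- Proposition 3, CoBP_λ stability for sub-Gaussian sensing. -/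
theorem cobp_lambda_stability (N M : ℕ) [Nonempty (Fin N)] (ε s K₀ lam : ℝ)
    (hs : 0 < s) (hε : 0 < ε) (hK₀ : 0 ≤ K₀) (hlam : 0 < lam)
    (sharp : (Fin N → ℝ) → ℝ)
    (sharp_tri : ∀ x y, sharp (x + y) ≤ sharp x + sharp y)
    (sharp_smul : ∀ (c : ℝ) x, sharp (c • x) = |c| * sharp x)
    (sharp_def : ∀ x, sharp x = 0 → x = 0)
    (A : (Fin N → ℝ) → (Fin M → ℝ))
    (hA : ∀ x y : Fin N → ℝ,
      (sharp x ≤ s ∧ l2norm x ≤ 1) → (sharp y ≤ s ∧ l2norm y ≤ 1) →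
      K₀ * linfnorm (x - y) ^ 2 ≤ l2norm (x - y) ^ 2 →
      A x = A y → l2norm (x - y) ≤ ε)
    (x₀ xstar : Fin N → ℝ)
    (hx₀ : sharp x₀ ≤ s ∧ l2norm x₀ ≤ 1) (hx₀inf : linfnorm x₀ ≤ lam)
    (hfeas : A xstar = A x₀ ∧ l2norm xstar ≤ 1 ∧ linfnorm xstar ≤ lam)
    (hmin : ∀ u : Fin N → ℝ,
      A u = A x₀ ∧ l2norm u ≤ 1 ∧ linfnorm u ≤ lam → sharp xstar ≤ sharp u) :
    l2norm (x₀ - xstar) ≤ ε + 2 * lam * Real.sqrt K₀ :=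
  cobp_lambda_stability_general N M ε s K₀ lam hε sharp A hA x₀ xstar hx₀ hx₀inf hfeas hmin
end

section
/- Let t ∈ ℝ be fixed, ξ ∼ U([-δ/2, δ/2]), and Q the midrise quantizer of resolution δ. Then the quantization error n := Q(t + ξ) - (t + ξ) is uniformly distributed on [-δ/2, δ/2]. -/
/-!
The quantization error `x ↦ Q(x) - x` is `δ`-periodic, and the image of Lebesgue measure on a
period interval under a periodic map does not depend on where the interval starts: it is always
the image of Haar measure on `ℝ ⧸ δℤ`. Moving the period interval to `[-t, -t + δ]`, the error of
`t + ξ` becomes the reflection `ξ ↦ δ/2 - t - ξ` (off a null set), which carries that interval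
onto `[-δ/2, δ/2]` and preserves Lebesgue measure.
-/

open MeasureTheory

/-- Midrise quantizer of resolution `δ`. -/
noncomputable def midriseQ (δ t : ℝ) : ℝ := δ * ((⌊t / δ⌋ : ℝ) + 1 / 2)

/-- Uniform probability measure on `[-δ/2, δ/2]`. -/
noncomputable def unifDither (δ : ℝ) : Measure ℝ :=
  (ENNReal.ofReal δ)⁻¹ • volume.restrict (Set.Icc (-(δ / 2)) (δ / 2))

open Set Function

theorem Function.Periodic.map_volume_restrict_Icc_eq {α : Type*} [MeasurableSpace α]
    {f : ℝ → α} {T : ℝ} (hf : Periodic f T) (hfm : Measurable f) (hT : 0 < T) (a b : ℝ) :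
    (volume.restrict (Icc a (a + T))).map f = (volume.restrict (Icc b (b + T))).map f := by
  have : Fact (0 < T) := ⟨hT⟩
  have hlift : Measurable hf.lift := measurable_from_quotient.mpr hfm
  have map_eq_map_lift (c : ℝ) :
      (volume.restrict (Icc c (c + T))).map f = (volume : Measure (AddCircle T)).map hf.lift := by
    rw [← Measure.restrict_congr_set Ioc_ae_eq_Icc, ← (AddCircle.measurePreserving_mk T c).map_eq,
      Measure.map_map hlift AddCircle.measurable_mk']
    rfl
  rw [map_eq_map_lift, map_eq_map_lift]

theorem measurable_midriseQ (δ : ℝ) : Measurable (midriseQ δ) := by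
  unfold midriseQ
  fun_prop

theorem periodic_midriseQ_sub {δ : ℝ} (hδ : δ ≠ 0) : Periodic (fun x => midriseQ δ x - x) δ := by
  intro x
  simp only [midriseQ, add_div, div_self hδ, Int.floor_add_one]
  push_cast
  ring

theorem midriseQ_sub_eq_of_mem_Ico {δ x : ℝ} (hx : x ∈ Ico 0 δ) :
    midriseQ δ x - x = δ / 2 - x := by
  have hδ : 0 < δ := hx.1.trans_lt hx.2
  have hfloor : ⌊x / δ⌋ = 0 :=
    Int.floor_eq_zero_iff.mpr ⟨div_nonneg hx.1 hδ.le, (div_lt_one hδ).mpr hx.2⟩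
  simp only [midriseQ, hfloor]
  push_cast
  ring

/-- with a uniform dither `ξ`, the quantization error
`Q(t + ξ) - (t + ξ)` is again uniform on `[-δ/2, δ/2]`, for any fixed `t`. -/
theorem dithered_quantization_error_uniform (δ t : ℝ) (hδ : 0 < δ) :
    Measure.map (fun ξ => midriseQ δ (t + ξ) - (t + ξ)) (unifDither δ) =
      unifDither δ := by
  set err : ℝ → ℝ := fun ξ => midriseQ δ (t + ξ) - (t + ξ)
  have err_periodic : Periodic err δ := (periodic_midriseQ_sub hδ.ne').const_add t
  have err_measurable : Measurable err :=
    ((measurable_midriseQ δ).sub measurable_id).comp (measurable_const_add t)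
  have err_ae_eq : err =ᵐ[volume.restrict (Icc (-t) (-t + δ))] (δ / 2 - t - ·) := by
    rw [← Measure.restrict_congr_set Ico_ae_eq_Icc]
    filter_upwards [ae_restrict_mem measurableSet_Ico] with ξ hξ
    rw [show err ξ = δ / 2 - (t + ξ) from
      midriseQ_sub_eq_of_mem_Ico ⟨by linarith [hξ.1], by linarith [hξ.2]⟩]
    ring
  have reflect_preimage : Icc (-t) (-t + δ) = (δ / 2 - t - ·) ⁻¹' Icc (-(δ / 2)) (δ / 2) := by
    rw [preimage_const_sub_Icc]
    congr 1 <;> ring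
  rw [unifDither, Measure.map_smul]
  congr 1
  calc (volume.restrict (Icc (-(δ / 2)) (δ / 2))).map err
      = (volume.restrict (Icc (-(δ / 2)) (-(δ / 2) + δ))).map err := by
        rw [neg_add_eq_sub, sub_half]
    _ = (volume.restrict (Icc (-t) (-t + δ))).map err :=
        err_periodic.map_volume_restrict_Icc_eq err_measurable hδ _ _
    _ = (volume.restrict (Icc (-t) (-t + δ))).map (δ / 2 - t - ·) := Measure.map_congr err_ae_eq
    _ = volume.restrict (Icc (-(δ / 2)) (δ / 2)) := by
        rw [reflect_preimage]
        exact ((Measure.measurePreserving_sub_left volume _).restrict_preimage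
          measurableSet_Icc).map_eq
end
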